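/- arXiv:1310.1626 — 2 statements merged into one kernel-verified Lean document; each statement's English description precedes it below -/
import Mathlib

section
/- Let M be the real 2×2 matrix [[-2λc + 2cα/κ², 2c(λc+1)/(ακ²) - 2c²/κ⁴], [2/ε, -2(μ(1-ε)-1) - 2c/(εακ²)]] with all parameters positive, and suppose ε, α are chosen as ε = 2b/κ², α = λκ²/2 with b = (c/(2μλ))^{1/2}. If μ > 1 + γ/κ² + γ²/κ⁴, where γ = (λc+2)(2/(cλ³))^{1/2}, then trace(M) < 0 and det(M) > 0, hence both eigenvalues of M have negative real part. -/
/-!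
With `α = λκ²/2`, `ε = 2b/κ²` and `c = 2μλb²` the `ε`-terms of the lower right entry cancel and
`M = [[-λc, 2c(λc+2)/(λκ⁴)], [κ²/b, -2(μ-1)]]`. Hence `tr M = -λc - 2(μ-1)` and, since
`(λc+2)/(λ²b) = γ√μ`, `det M = 2λc(μ-1 - g√μ)` with `g = γ/κ²`. The criterion says
`g + g² < t := μ-1`, which forces `g²(t+1) < t²`, i.e. `g√μ < μ-1`. Finally a root of
`z² - Tz + D` with `T < 0 < D` is either real, hence negative, or has real part `T/2`.
-/

open Matrix Polynomial

theorem Complex.re_neg_of_sq_sub_mul_add_eq_zero {T D : ℝ} (hT : T < 0) (hD : 0 < D) {z : ℂ}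
    (hz : z ^ 2 - T * z + D = 0) : z.re < 0 := by
  have hre : z.re ^ 2 - z.im ^ 2 - T * z.re + D = 0 := by
    simpa [sq] using congrArg Complex.re hz
  have him : z.im * (2 * z.re - T) = 0 := by
    have := congrArg Complex.im hz
    simp only [sq, Complex.sub_im, Complex.add_im, Complex.mul_im, Complex.ofReal_re,
      Complex.ofReal_im, Complex.zero_im] at this
    linarith
  rcases mul_eq_zero.1 him with hreal | hcenter
  · by_contra! h
    nlinarith [mul_nonneg (neg_nonneg.2 hT.le) h]
  · linarith

theorem Matrix.re_neg_of_isRoot_charpoly_map_ofReal {A : Matrix (Fin 2) (Fin 2) ℝ}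
    (htr : A.trace < 0) (hdet : 0 < A.det) {z : ℂ}
    (hz : (A.map Complex.ofReal).charpoly.IsRoot z) : z.re < 0 := by
  refine Complex.re_neg_of_sq_sub_mul_add_eq_zero htr hdet ?_
  rw [charpoly_fin_two] at hz
  simpa [trace_fin_two, det_fin_two] using hz

theorem mul_sqrt_add_one_lt {g t : ℝ} (hg : 0 ≤ g) (h : g + g ^ 2 < t) : g * √(t + 1) < t := by
  have ht : 0 < t := lt_of_le_of_lt (by positivity) h
  refine lt_of_pow_lt_pow_left₀ 2 ht.le ?_
  rw [mul_pow, Real.sq_sqrt (by linarith)]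
  nlinarith [mul_nonneg hg (sub_pos.2 h).le, pow_nonneg hg 3]

theorem sqrt_mul_sqrt_mul_sqrt_eq_inv_sq {lam c mu : ℝ} (hlam : 0 < lam) (hc : 0 < c)
    (hmu : 0 < mu) : √(2 / (c * lam ^ 3)) * √mu * √(c / (2 * mu * lam)) = 1 / lam ^ 2 := by
  rw [← Real.sqrt_mul (by positivity), ← Real.sqrt_mul (by positivity)]
  have h : 2 / (c * lam ^ 3) * mu * (c / (2 * mu * lam)) = (1 / lam ^ 2) ^ 2 := by
    field_simp
  rw [h, Real.sqrt_sq (by positivity)]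

noncomputable def coefficientMatrix (lam c kap mu ε α : ℝ) : Matrix (Fin 2) (Fin 2) ℝ :=
  !![-2 * lam * c + 2 * c * α / kap ^ 2,
     2 * c * (lam * c + 1) / (α * kap ^ 2) - 2 * c ^ 2 / kap ^ 4;
     2 / ε,
     -2 * (mu * (1 - ε) - 1) - 2 * c / (ε * α * kap ^ 2)]

theorem coefficientMatrix_eq {lam c kap mu b : ℝ} (hlam : lam ≠ 0) (hkap : kap ≠ 0) (hb : b ≠ 0)
    (hc : c = 2 * mu * lam * b ^ 2) :
    coefficientMatrix lam c kap mu (2 * b / kap ^ 2) (lam * kap ^ 2 / 2) =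
      !![-(lam * c), 2 * c * (lam * c + 2) / (lam * kap ^ 4); kap ^ 2 / b, -2 * (mu - 1)] := by
  have h₁₁ : -2 * lam * c + 2 * c * (lam * kap ^ 2 / 2) / kap ^ 2 = -(lam * c) := by
    field_simp; ring
  have h₁₂ : 2 * c * (lam * c + 1) / (lam * kap ^ 2 / 2 * kap ^ 2) - 2 * c ^ 2 / kap ^ 4 =
      2 * c * (lam * c + 2) / (lam * kap ^ 4) := by
    field_simp; ring
  have h₂₁ : 2 / (2 * b / kap ^ 2) = kap ^ 2 / b := by
    field_simp
  have h₂₂ : -2 * (mu * (1 - 2 * b / kap ^ 2) - 1) -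
      2 * c / (2 * b / kap ^ 2 * (lam * kap ^ 2 / 2) * kap ^ 2) = -2 * (mu - 1) := by
    subst hc; field_simp; ring
  rw [coefficientMatrix, h₁₁, h₁₂, h₂₁, h₂₂]

theorem coefficient_matrix_stable_general
    (lam c kap mu : ℝ) (hlam : 0 < lam) (hc : 0 < c) (hkap : 0 < kap)
    (b ε α γ : ℝ)
    (hb : b = Real.sqrt (c / (2 * mu * lam)))
    (hε : ε = 2 * b / kap ^ 2)
    (hα : α = lam * kap ^ 2 / 2)
    (hγ : γ = (lam * c + 2) * Real.sqrt (2 / (c * lam ^ 3)))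
    (hcrit : mu > 1 + γ / kap ^ 2 + γ ^ 2 / kap ^ 4) :
    let M : Matrix (Fin 2) (Fin 2) ℝ :=
      !![-2 * lam * c + 2 * c * α / kap ^ 2,
         2 * c * (lam * c + 1) / (α * kap ^ 2) - 2 * c ^ 2 / kap ^ 4;
         2 / ε,
         -2 * (mu * (1 - ε) - 1) - 2 * c / (ε * α * kap ^ 2)]
    M.trace < 0 ∧ 0 < M.det ∧
      ∀ z : ℂ, ((M.map (Complex.ofReal)).charpoly.IsRoot z) → z.re < 0 := by
  subst hε hα
  intro M
  have hγ_nonneg : 0 ≤ γ := hγ ▸ by positivity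
  have hmu : 1 < mu := by
    have : 0 ≤ γ / kap ^ 2 + γ ^ 2 / kap ^ 4 := by positivity
    linarith
  have hb_pos : 0 < b := hb ▸ Real.sqrt_pos.2 (by positivity)
  have hc_eq : c = 2 * mu * lam * b ^ 2 := by
    rw [hb, Real.sq_sqrt (by positivity)]; field_simp
  have hM : M =
      !![-(lam * c), 2 * c * (lam * c + 2) / (lam * kap ^ 4); kap ^ 2 / b, -2 * (mu - 1)] :=
    coefficientMatrix_eq hlam.ne' hkap.ne' hb_pos.ne' hc_eq
  have hγ_mul : γ * √mu = (lam * c + 2) / (lam ^ 2 * b) := by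
    have := sqrt_mul_sqrt_mul_sqrt_eq_inv_sq hlam hc (by linarith : 0 < mu)
    rw [← hb] at this
    field_simp at this
    rw [hγ, eq_div_iff (by positivity)]
    linear_combination (lam * c + 2) * this
  have hgap : γ / kap ^ 2 * √mu < mu - 1 := by
    have h := mul_sqrt_add_one_lt (g := γ / kap ^ 2) (t := mu - 1) (by positivity)
      (by rw [div_pow, ← pow_mul]; linarith)
    rwa [sub_add_cancel] at h
  have htr : M.trace < 0 := by
    rw [hM, trace_fin_two_of]
    linarith [mul_pos hlam hc]
  have hdet : 0 < M.det := by
    have : M.det = 2 * lam * c * (mu - 1 - γ / kap ^ 2 * √mu) := by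
      rw [hM, det_fin_two_of, div_mul_eq_mul_div γ, hγ_mul]
      field_simp
    rw [this]
    have := sub_pos.2 hgap
    positivity
  exact ⟨htr, hdet, fun z hz => re_neg_of_isRoot_charpoly_map_ofReal htr hdet hz⟩

/-- With the choices `ε = 2b/κ²`, `α = λκ²/2`, `b = (c/(2μλ))^{1/2}`, if
`μ > 1 + γ/κ² + γ²/κ⁴` with `γ = (λc+2)(2/(cλ³))^{1/2}`, then the coefficient matrix `M`
has negative trace and positive determinant, hence both its eigenvalues have negative
real part. -/
theorem coefficient_matrix_stable
    (lam c kap mu : ℝ) (hlam : 0 < lam) (hc : 0 < c) (hkap : 0 < kap) (hmu : 0 < mu)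
    (b ε α γ : ℝ)
    (hb : b = Real.sqrt (c / (2 * mu * lam)))
    (hε : ε = 2 * b / kap ^ 2)
    (hα : α = lam * kap ^ 2 / 2)
    (hγ : γ = (lam * c + 2) * Real.sqrt (2 / (c * lam ^ 3)))
    (hcrit : mu > 1 + γ / kap ^ 2 + γ ^ 2 / kap ^ 4) :
    let M : Matrix (Fin 2) (Fin 2) ℝ :=
      !![-2 * lam * c + 2 * c * α / kap ^ 2,
         2 * c * (lam * c + 1) / (α * kap ^ 2) - 2 * c ^ 2 / kap ^ 4;
         2 / ε,
         -2 * (mu * (1 - ε) - 1) - 2 * c / (ε * α * kap ^ 2)]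
    M.trace < 0 ∧ 0 < M.det ∧
      ∀ z : ℂ, ((M.map (Complex.ofReal)).charpoly.IsRoot z) → z.re < 0 :=
  coefficient_matrix_stable_general lam c kap mu hlam hc hkap b ε α γ hb hε hα hγ hcrit
end

section
/- Let B(t,x) = curl A(t,x) on ∂Ω for a solution of the TDGL system in the Coulomb gauge, and suppose the tangential derivative of curl A along ∂Ω equals J/κ² at each boundary point, with J time-independent and ∫_{∂Ω} J ds = 0, while the boundary average of curl A equals h_ex. Then B is independent of t and is given explicitly by B(x) = h_r - (1/κ²) · (average over x̃ ∈ ∂Ω of |Γ(x̃,x)| J_r(x̃)), where Γ(x̃,x) is the boundary arc from x̃ to x in the positive direction, J = hJ_r, h_ex = h·h_r. -/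
open MeasureTheory intervalIntegral

/-- Positively-oriented boundary arc length from `s'` to `s` on a boundary of total
length `L` (arc length parametrization modulo `L`). -/
noncomputable def arcLen (L s' s : ℝ) : ℝ := L * Int.fract ((s - s') / L)

/-!
Since `B(t,·)` has derivative `J_r/κ²`, it is `B(t,0) + F/κ²` with `F(s) = ∫₀ˢ J_r`, and the
average condition fixes `B(t,0)` independently of `t`. For the explicit formula, the integrand
`s' ↦ arcLen(s',s) J_r(s')` is `L`-periodic and equals `(s - s') J_r(s')` on `(s - L, s]`; an
integration by parts against the periodic primitive `F` turns `∫ arcLen(s',s) J_r(s') ds'`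
into `∫₀ᴸ F - L F(s)`.
-/

section ArcLength

variable {L : ℝ}

theorem arcLen_periodic (hL : L ≠ 0) (s : ℝ) : Function.Periodic (fun s' => arcLen L s' s) L := by
  intro s'
  have : (s - (s' + L)) / L = (s - s') / L - 1 := by field_simp; ring
  simp only [arcLen, this, Int.fract_sub_one]

theorem arcLen_eq_sub_of_mem_Ioc (hL : 0 < L) {s s' : ℝ} (hs' : s' ∈ Set.Ioc (s - L) s) :
    arcLen L s' s = s - s' := by
  obtain ⟨hlt, hle⟩ := hs'
  have hfract : Int.fract ((s - s') / L) = (s - s') / L :=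
    Int.fract_eq_self.2 ⟨div_nonneg (by linarith) hL.le, (div_lt_one hL).2 (by linarith)⟩
  rw [arcLen, hfract, mul_div_cancel₀ _ hL.ne']

theorem integral_arcLen_mul_eq {f : ℝ → ℝ} (hL : 0 < L) (hf : Function.Periodic f L) (s : ℝ) :
    ∫ s' in (0:ℝ)..L, arcLen L s' s * f s' = ∫ s' in s - L..s, (s - s') * f s' := by
  have hper : Function.Periodic (fun s' => arcLen L s' s * f s') L := fun s' => by
    simp only [arcLen_periodic hL.ne' s s', hf s']
  have hshift := hper.intervalIntegral_add_eq 0 (s - L)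
  rw [zero_add, sub_add_cancel] at hshift
  rw [hshift]
  refine integral_congr_ae (Filter.Eventually.of_forall fun s' hs' => ?_)
  rw [Set.uIoc_of_le (by linarith)] at hs'
  rw [arcLen_eq_sub_of_mem_Ioc hL hs']

theorem integral_sub_mul_eq_of_hasDerivAt {f F : ℝ → ℝ} (hF : ∀ x, HasDerivAt F (f x) x)
    (hf : Continuous f) (a b : ℝ) :
    ∫ x in a..b, (b - x) * f x = (∫ x in a..b, F x) - (b - a) * F a := by
  have hparts := integral_mul_deriv_eq_deriv_mul (u := fun x => b - x) (u' := fun _ => -1)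
    (fun x _ => (hasDerivAt_id x).const_sub b) (fun x _ => hF x)
    intervalIntegrable_const (hf.intervalIntegrable a b)
  simp only [sub_self, zero_mul, neg_one_mul, intervalIntegral.integral_neg] at hparts
  linarith

theorem periodic_primitive_of_integral_eq_zero {f : ℝ → ℝ} (hf : Continuous f)
    (hper : Function.Periodic f L) (hzero : ∫ x in (0:ℝ)..L, f x = 0) :
    Function.Periodic (fun s => ∫ x in (0:ℝ)..s, f x) L := fun s => by
  simpa [hzero] using hper.intervalIntegral_add_eq_add 0 s fun a b => hf.intervalIntegrable a b

theorem integral_arcLen_mul_eq_primitive {f : ℝ → ℝ} (hL : 0 < L) (hf : Continuous f)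
    (hper : Function.Periodic f L) (hzero : ∫ x in (0:ℝ)..L, f x = 0) (s : ℝ) :
    ∫ s' in (0:ℝ)..L, arcLen L s' s * f s' =
      (∫ u in (0:ℝ)..L, ∫ x in (0:ℝ)..u, f x) - L * ∫ x in (0:ℝ)..s, f x := by
  set F : ℝ → ℝ := fun u => ∫ x in (0:ℝ)..u, f x
  have hF : ∀ x, HasDerivAt F (f x) x := fun x => (hf.integral_hasStrictDerivAt 0 x).hasDerivAt
  have hFper : Function.Periodic F L := periodic_primitive_of_integral_eq_zero hf hper hzero
  have hFshift := hFper.intervalIntegral_add_eq (s - L) 0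
  rw [sub_add_cancel, zero_add] at hFshift
  rw [integral_arcLen_mul_eq hL hper, integral_sub_mul_eq_of_hasDerivAt hF hf, hFshift,
    sub_sub_cancel, hFper.sub_eq]

end ArcLength

theorem boundary_field_time_independent_formula_general
    (L kap hr : ℝ) (hL : 0 < L)
    (B : ℝ → ℝ → ℝ) (Jr : ℝ → ℝ)
    (hJcont : Continuous Jr) (hJper : ∀ s, Jr (s + L) = Jr s)
    (hJzero : (∫ s in (0:ℝ)..L, Jr s) = 0)
    (hBs : ∀ t s, HasDerivAt (B t) (Jr s / kap ^ 2) s)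
    (hBavg : ∀ t, (1 / L) * ∫ s in (0:ℝ)..L, B t s = hr) :
    ∀ t t' s : ℝ,
      B t s = B t' s ∧
      B t s = hr - (1 / kap ^ 2) * ((1 / L) * ∫ s' in (0:ℝ)..L, arcLen L s' s * Jr s') := by
  set F : ℝ → ℝ := fun u => ∫ x in (0:ℝ)..u, Jr x
  have hB : ∀ t s, B t s = B t 0 + F s / kap ^ 2 := fun t s => by
    have := integral_eq_sub_of_hasDerivAt (fun x _ => hBs t x)
      ((hJcont.div_const _).intervalIntegrable 0 s)
    rw [intervalIntegral.integral_div] at this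
    linarith
  have hB0 : ∀ t, B t 0 = hr - (1 / L) * (∫ u in (0:ℝ)..L, F u) / kap ^ 2 := fun t => by
    have hFcont : Continuous F := continuous_primitive hJcont.intervalIntegrable 0
    rw [← hBavg t, integral_congr fun s _ => hB t s,
      integral_add intervalIntegrable_const ((hFcont.div_const _).intervalIntegrable 0 L),
      intervalIntegral.integral_const, intervalIntegral.integral_div, smul_eq_mul]
    field_simp
    ring
  have hformula : ∀ t s,
      B t s = hr - (1 / kap ^ 2) * ((1 / L) * ∫ s' in (0:ℝ)..L, arcLen L s' s * Jr s') :=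
    fun t s => by
      rw [integral_arcLen_mul_eq_primitive hL hJcont hJper hJzero, hB, hB0]
      field_simp
      ring
  exact fun t t' s => ⟨(hformula t s).trans (hformula t' s).symm, hformula t s⟩

/-- The boundary magnetic field is time-independent and explicitly determined:
if `∂B/∂τ = J_r/κ²` along the boundary (arc length `s`, total length `L`), with `J_r`
`L`-periodic of zero mean, and the boundary average of `B(t,·)` equals `h_r` for all `t`,
then `B` does not depend on `t` and
`B(t,s) = h_r - (1/κ²)·⨍ arcLen(s',s)·J_r(s') ds'`. -/
theorem boundary_field_time_independent_formula
    (L kap hr : ℝ) (hL : 0 < L) (hkap : kap ≠ 0)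
    (B : ℝ → ℝ → ℝ) (Jr : ℝ → ℝ)
    (hJcont : Continuous Jr) (hJper : ∀ s, Jr (s + L) = Jr s)
    (hJzero : (∫ s in (0:ℝ)..L, Jr s) = 0)
    (hBper : ∀ t s, B t (s + L) = B t s)
    (hBs : ∀ t s, HasDerivAt (B t) (Jr s / kap ^ 2) s)
    (hBavg : ∀ t, (1 / L) * ∫ s in (0:ℝ)..L, B t s = hr) :
    ∀ t t' s : ℝ,
      B t s = B t' s ∧
      B t s = hr - (1 / kap ^ 2) * ((1 / L) * ∫ s' in (0:ℝ)..L, arcLen L s' s * Jr s') :=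
  boundary_field_time_independent_formula_general L kap hr hL B Jr hJcont hJper hJzero hBs hBavg
end
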